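/- (Proposition 2, tour BPCCSP.) Let v₁, v₂, v₃, v₄ be four distinct vertices in V, with e₁₂, e₁₃, e₁₄, e₂₃, e₂₄, e₃₄ ∈ E the edges connecting them, and suppose that ℓ(e₁₂) + ℓ(e₃₄) > ℓ(e₁₃) + ℓ(e₂₄) and ℓ(e₁₂) + ℓ(e₃₄) > ℓ(e₂₃) + ℓ(e₁₄). Then for any optimal tour T of the tour BPCCSP, there exists an optimal tour T' that does not contain both the edges e₁₂ and e₃₄, and such that T ∖ {e₁₂, e₁₃, e₁₄, e₂₃, e₂₄, e₃₄} = T' ∖ {e₁₂, e₁₃, e₁₄, e₂₃, e₂₄, e₃₄}. -/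
import Mathlib


variable {V : Type*} [Fintype V] [DecidableEq V]

/-- The set of endpoints of the edges of an edge set `C` (the vertices "visited" by `C`). -/
def edgeVerts (C : Finset (Sym2 V)) : Finset V :=
  Finset.univ.filter (fun v => ∃ e ∈ C, v ∈ e)

/-- Two vertices are connected in an edge set `C` if there is a path between them
using only edges of `C`. -/
def ConnIn (C : Finset (Sym2 V)) (u w : V) : Prop :=
  (SimpleGraph.fromEdgeSet (↑C : Set (Sym2 V))).Reachable u w

/-- A tour: an edge set `C ⊆ E(G)` whose induced subgraph is connected and in which every
vertex of `V(C)` has degree exactly `2`. -/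
def IsTour (G : SimpleGraph V) (C : Finset (Sym2 V)) : Prop :=
  (↑C : Set (Sym2 V)) ⊆ G.edgeSet ∧
  (∀ u ∈ edgeVerts C, ∀ w ∈ edgeVerts C, ConnIn C u w) ∧
  (∀ v ∈ edgeVerts C, (C.filter (fun e => v ∈ e)).card = 2)

/-- An instance of a budgeted prize-collecting covering subgraph problem: a finite simple
graph with a depot, nonnegative edge costs, a positive budget, nonnegative vertex prizes,
neighbourhoods, nonnegative coverage prizes, and coverage capacities. -/
structure BPCCSPInstance (V : Type*) [Fintype V] [DecidableEq V] where
  G : SimpleGraph V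
  depot : V
  len : Sym2 V → ℝ
  len_nonneg : ∀ e ∈ G.edgeSet, 0 ≤ len e
  budget : ℝ
  budget_pos : 0 < budget
  prize : V → ℝ
  prize_nonneg : ∀ v, 0 ≤ prize v
  nbhd : V → Finset V
  nbhd_not_self : ∀ v, v ∉ nbhd v
  covPrize : V → V → ℝ
  covPrize_nonneg : ∀ v w, 0 ≤ covPrize v w
  cap : V → ℕ

/-- A coverage assignment for a visited set `S`: a partial map `σ` from `V ∖ S` to `S`
such that `σ v ∈ N_v ∩ S` whenever defined, and every `w ∈ S` has at most `c_w` preimages. -/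
def IsCoverAssign (I : BPCCSPInstance V) (S : Finset V) (σ : V → Option V) : Prop :=
  (∀ v w, σ v = some w → v ∉ S ∧ w ∈ S ∧ w ∈ I.nbhd v) ∧
  (∀ w ∈ S, (Finset.univ.filter (fun v => σ v = some w)).card ≤ I.cap w)

/-- The value of a coverage assignment: the sum of `q_{v, σ(v)}` over all `v` where `σ` is
defined. -/
def assignValue (I : BPCCSPInstance V) (σ : V → Option V) : ℝ :=
  ∑ v, Option.elim (σ v) 0 (fun w => I.covPrize v w)

/-- The collected prize of a visited set `S`: the sum of the prizes of the vertices of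
`S ∖ {depot}` plus the maximum value of a coverage assignment for `S`. -/
noncomputable def collectedPrize (I : BPCCSPInstance V) (S : Finset V) : ℝ :=
  (∑ v ∈ S.erase I.depot, I.prize v) +
    sSup {x : ℝ | ∃ σ, IsCoverAssign I S σ ∧ x = assignValue I σ}

/-- A tour is feasible if it visits the depot and its cost does not exceed the budget. -/
def IsFeasibleTour (I : BPCCSPInstance V) (T : Finset (Sym2 V)) : Prop :=
  IsTour I.G T ∧ I.depot ∈ edgeVerts T ∧ (∑ e ∈ T, I.len e) ≤ I.budget

/-- A tour is optimal if it is feasible and its collected prize is maximal among all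
feasible tours. -/
def IsOptimalTour (I : BPCCSPInstance V) (T : Finset (Sym2 V)) : Prop :=
  IsFeasibleTour I T ∧
    ∀ T' : Finset (Sym2 V), IsFeasibleTour I T' →
      collectedPrize I (edgeVerts T') ≤ collectedPrize I (edgeVerts T)

lemma connIn_refl (C : Finset (Sym2 V)) (u : V) : ConnIn C u u := SimpleGraph.Reachable.refl u

lemma connIn_symm {C : Finset (Sym2 V)} {u w : V} (h : ConnIn C u w) : ConnIn C w u :=
  SimpleGraph.Reachable.symm h

lemma connIn_trans {C : Finset (Sym2 V)} {u w x : V} (h : ConnIn C u w)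
    (h' : ConnIn C w x) : ConnIn C u x := SimpleGraph.Reachable.trans h h'

lemma connIn_mono {C D : Finset (Sym2 V)} (h : C ⊆ D) {u w : V}
    (hc : ConnIn C u w) : ConnIn D u w :=
  hc.mono (SimpleGraph.fromEdgeSet_mono (by exact_mod_cast h))

lemma connIn_of_mem {C : Finset (Sym2 V)} {e : Sym2 V} (he : e ∈ C) {a b : V}
    (ha : a ∈ e) (hb : b ∈ e) : ConnIn C a b := by
  by_cases hab : a = b
  · exact hab ▸ connIn_refl C a
  · have : e = s(a, b) := (Sym2.mem_and_mem_iff hab).mp ⟨ha, hb⟩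
    exact ((SimpleGraph.fromEdgeSet_adj _).mpr ⟨by simpa [← this] using he, hab⟩).reachable

lemma connIn_closed {C : Finset (Sym2 V)} {S : Set V}
    (hS : ∀ x y : V, s(x, y) ∈ C → x ∈ S → y ∈ S) {u w : V} (hu : u ∈ S)
    (h : ConnIn C u w) : w ∈ S := by
  rw [ConnIn, SimpleGraph.reachable_iff_reflTransGen] at h
  induction h with
  | refl => exact hu
  | tail _ hadj ih =>
      obtain ⟨hmem, -⟩ := (SimpleGraph.fromEdgeSet_adj _).mp hadj
      exact hS _ _ (by exact_mod_cast hmem) ih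

lemma mem_edgeVerts {C : Finset (Sym2 V)} {v : V} :
    v ∈ edgeVerts C ↔ ∃ e ∈ C, v ∈ e := by simp [edgeVerts]

lemma filter_swap_eq (T : Finset (Sym2 V)) (e1 e2 f1 f2 : Sym2 V) (v : V)
    (hv1 : v ∈ e1) (hv2 : v ∉ e2) (hvf1 : v ∈ f1) (hvf2 : v ∉ f2) :
    ((T \ {e1, e2}) ∪ {f1, f2}).filter (fun e => v ∈ e)
      = ((T.filter (fun e => v ∈ e)).erase e1) ∪ {f1} := by
  ext e
  simp only [Finset.mem_filter, Finset.mem_union, Finset.mem_sdiff, Finset.mem_insert,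
    Finset.mem_singleton, Finset.mem_erase]
  constructor
  · rintro ⟨(⟨heT, hne⟩ | (rfl | rfl)), hve⟩
    · push_neg at hne
      exact Or.inl ⟨hne.1, heT, hve⟩
    · exact Or.inr rfl
    · exact absurd hve hvf2
  · rintro (⟨hne1, heT, hve⟩ | rfl)
    · refine ⟨Or.inl ⟨heT, ?_⟩, hve⟩
      rintro (rfl | rfl)
      · exact hne1 rfl
      · exact hv2 hve
    · exact ⟨Or.inr (Or.inl rfl), hvf1⟩

lemma filter_swap_eq_untouched (T : Finset (Sym2 V)) (e1 e2 f1 f2 : Sym2 V) (v : V)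
    (hv1 : v ∉ e1) (hv2 : v ∉ e2) (hvf1 : v ∉ f1) (hvf2 : v ∉ f2) :
    ((T \ {e1, e2}) ∪ {f1, f2}).filter (fun e => v ∈ e)
      = T.filter (fun e => v ∈ e) := by
  ext e
  simp only [Finset.mem_filter, Finset.mem_union, Finset.mem_sdiff, Finset.mem_insert,
    Finset.mem_singleton]
  constructor
  · rintro ⟨(⟨heT, hne⟩ | (rfl | rfl)), hve⟩
    · exact ⟨heT, hve⟩
    · exact absurd hve hvf1
    · exact absurd hve hvf2
  · rintro ⟨heT, hve⟩
    refine ⟨Or.inl ⟨heT, ?_⟩, hve⟩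
    rintro (rfl | rfl)
    · exact hv1 hve
    · exact hv2 hve

lemma card_filter_swap (T : Finset (Sym2 V)) (e1 e2 f1 f2 : Sym2 V) (v : V)
    (hv1 : v ∈ e1) (hv2 : v ∉ e2) (hvf1 : v ∈ f1) (hvf2 : v ∉ f2)
    (he1T : e1 ∈ T) (hf1T : f1 ∉ T)
    (hdeg : (T.filter (fun e => v ∈ e)).card = 2) :
    (((T \ {e1, e2}) ∪ {f1, f2}).filter (fun e => v ∈ e)).card = 2 := by
  rw [filter_swap_eq T e1 e2 f1 f2 v hv1 hv2 hvf1 hvf2]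
  rw [Finset.card_union_of_disjoint, Finset.card_erase_of_mem
    (Finset.mem_filter.mpr ⟨he1T, hv1⟩), hdeg, Finset.card_singleton]
  · exact Finset.disjoint_singleton_right.mpr
      (fun h => hf1T (Finset.mem_filter.mp (Finset.mem_of_mem_erase h)).1)

lemma swap_tour (I : BPCCSPInstance V) (a b c d : V)
    (hab : a ≠ b) (hac : a ≠ c) (had : a ≠ d) (hbc : b ≠ c) (hbd : b ≠ d) (hcd : c ≠ d)
    (hGac : s(a, c) ∈ I.G.edgeSet) (hGbd : s(b, d) ∈ I.G.edgeSet)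
    (T : Finset (Sym2 V)) (hT : IsOptimalTour I T)
    (habT : s(a, b) ∈ T) (hcdT : s(c, d) ∈ T)
    (hacT : s(a, c) ∉ T) (hbdT : s(b, d) ∉ T)
    (hcost : I.len s(a, c) + I.len s(b, d) < I.len s(a, b) + I.len s(c, d))
    (hcc : ConnIn (T \ {s(a, b), s(c, d)}) a b ∨ ConnIn (T \ {s(a, b), s(c, d)}) a d ∨
           ConnIn (T \ {s(a, b), s(c, d)}) b c ∨ ConnIn (T \ {s(a, b), s(c, d)}) c d) :
    IsOptimalTour I ((T \ {s(a, b), s(c, d)}) ∪ {s(a, c), s(b, d)}) ∧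
      s(a, b) ∉ ((T \ {s(a, b), s(c, d)}) ∪ {s(a, c), s(b, d)}) := by
  obtain ⟨⟨⟨hTsub, hTconn, hTdeg⟩, hTdepot, hTbudget⟩, hTopt⟩ := hT
  set H := T \ ({s(a, b), s(c, d)} : Finset (Sym2 V)) with hH
  set T' := H ∪ ({s(a, c), s(b, d)} : Finset (Sym2 V)) with hT'
  have hba := hab.symm; have hca := hac.symm; have hda := had.symm
  have hcb := hbc.symm; have hdb := hbd.symm; have hdc := hcd.symm
  -- edge distinctness
  have eabcd : s(a, b) ≠ s(c, d) := by rw [ne_eq, Sym2.eq_iff]; tauto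
  have eabac : s(a, b) ≠ s(a, c) := by rw [ne_eq, Sym2.eq_iff]; tauto
  have eabbd : s(a, b) ≠ s(b, d) := by rw [ne_eq, Sym2.eq_iff]; tauto
  have ecdac : s(c, d) ≠ s(a, c) := by rw [ne_eq, Sym2.eq_iff]; tauto
  have ecdbd : s(c, d) ≠ s(b, d) := by rw [ne_eq, Sym2.eq_iff]; tauto
  have eacbd : s(a, c) ≠ s(b, d) := by rw [ne_eq, Sym2.eq_iff]; tauto
  have hHsub : H ⊆ T := Finset.sdiff_subset
  have hHT' : H ⊆ T' := Finset.subset_union_left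
  have hacT' : s(a, c) ∈ T' := Finset.mem_union_right _ (by simp)
  have hbdT' : s(b, d) ∈ T' := Finset.mem_union_right _ (by simp)
  -- vertex membership in sym2 pairs
  have hmem : ∀ x y : V, x ∈ s(x, y) := fun x y => Sym2.mem_mk_left x y
  have hmem' : ∀ x y : V, y ∈ s(x, y) := fun x y => Sym2.mem_mk_right x y
  have haT : a ∈ edgeVerts T := mem_edgeVerts.mpr ⟨_, habT, hmem a b⟩
  have hbT : b ∈ edgeVerts T := mem_edgeVerts.mpr ⟨_, habT, hmem' a b⟩
  have hcT : c ∈ edgeVerts T := mem_edgeVerts.mpr ⟨_, hcdT, hmem c d⟩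
  have hdT : d ∈ edgeVerts T := mem_edgeVerts.mpr ⟨_, hcdT, hmem' c d⟩
  -- edgeVerts are preserved
  have hev : edgeVerts T' = edgeVerts T := by
    ext v
    rw [mem_edgeVerts, mem_edgeVerts]
    constructor
    · rintro ⟨e, he, hv⟩
      rcases Finset.mem_union.mp he with heH | henew
      · exact ⟨e, hHsub heH, hv⟩
      · rcases Finset.mem_insert.mp henew with rfl | h1
        · rcases Sym2.mem_iff.mp hv with rfl | rfl
          · exact ⟨_, habT, hmem v b⟩
          · exact ⟨_, hcdT, hmem v d⟩
        · rw [Finset.mem_singleton] at h1; subst h1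
          rcases Sym2.mem_iff.mp hv with rfl | rfl
          · exact ⟨_, habT, hmem' a v⟩
          · exact ⟨_, hcdT, hmem' c v⟩
    · rintro ⟨e, he, hv⟩
      by_cases h1 : e = s(a, b)
      · subst h1
        rcases Sym2.mem_iff.mp hv with rfl | rfl
        · exact ⟨_, hacT', hmem v c⟩
        · exact ⟨_, hbdT', hmem v d⟩
      by_cases h2 : e = s(c, d)
      · subst h2
        rcases Sym2.mem_iff.mp hv with rfl | rfl
        · exact ⟨_, hacT', hmem' a v⟩
        · exact ⟨_, hbdT', hmem' b v⟩
      · exact ⟨e, hHT' (Finset.mem_sdiff.mpr ⟨he, by simp [h1, h2]⟩), hv⟩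
  -- membership of the four vertices in the pairs
  have namem : ∀ (x y : V), a ≠ x → a ≠ y → a ∉ s(x, y) := by
    intro x y hx hy h
    rcases Sym2.mem_iff.mp h with rfl | rfl
    · exact hx rfl
    · exact hy rfl
  -- T' is contained in G
  have hT'sub : (↑T' : Set (Sym2 V)) ⊆ I.G.edgeSet := by
    intro e he
    rw [Finset.mem_coe, hT', Finset.mem_union] at he
    rcases he with heH | henew
    · exact hTsub (hHsub heH)
    · rcases Finset.mem_insert.mp henew with rfl | h1
      · exact hGac
      · rw [Finset.mem_singleton] at h1; subst h1; exact hGbd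
  -- degrees
  have hdeg' : ∀ v ∈ edgeVerts T', (T'.filter (fun e => v ∈ e)).card = 2 := by
    intro v hv
    rw [hev] at hv
    by_cases hva : v = a
    · subst hva
      exact card_filter_swap T _ _ _ _ v (hmem v b)
        (namem c d hac had) (hmem v c) (namem b d hab had) habT hacT (hTdeg v hv)
    by_cases hvb : v = b
    · subst hvb
      rw [hT', hH, Finset.pair_comm s(a, c) s(v, d)]
      refine card_filter_swap T _ _ _ _ v (hmem' a v) ?_ (hmem v d) ?_ habT hbdT (hTdeg v hv)
      · intro h; rcases Sym2.mem_iff.mp h with rfl | rfl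
        · exact hbc rfl
        · exact hbd rfl
      · intro h; rcases Sym2.mem_iff.mp h with rfl | rfl
        · exact hab rfl
        · exact hbc.symm rfl
    by_cases hvc : v = c
    · subst hvc
      rw [hT', hH, Finset.pair_comm s(a, b) s(v, d)]
      refine card_filter_swap T _ _ _ _ v (hmem v d) ?_ (hmem' a v) ?_ hcdT hacT (hTdeg v hv)
      · intro h; rcases Sym2.mem_iff.mp h with rfl | rfl
        · exact hac rfl
        · exact hbc rfl
      · intro h; rcases Sym2.mem_iff.mp h with rfl | rfl
        · exact hbc rfl
        · exact hcd rfl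
    by_cases hvd : v = d
    · subst hvd
      rw [hT', hH, Finset.pair_comm s(a, b) s(c, v), Finset.pair_comm s(a, c) s(b, v)]
      refine card_filter_swap T _ _ _ _ v (hmem' c v) ?_ (hmem' b v) ?_ hcdT hbdT (hTdeg v hv)
      · intro h; rcases Sym2.mem_iff.mp h with rfl | rfl
        · exact had rfl
        · exact hbd rfl
      · intro h; rcases Sym2.mem_iff.mp h with rfl | rfl
        · exact had rfl
        · exact hcd rfl
    · have hn : ∀ (x y : V), v ≠ x → v ≠ y → v ∉ s(x, y) := by
        intro x y hx hy h
        rcases Sym2.mem_iff.mp h with rfl | rfl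
        · exact hx rfl
        · exact hy rfl
      rw [hT', hH, filter_swap_eq_untouched T _ _ _ _ v (hn a b hva hvb) (hn c d hvc hvd)
        (hn a c hva hvc) (hn b d hvb hvd)]
      exact hTdeg v hv
  -- connectivity
  have cac : ConnIn T' a c := connIn_of_mem hacT' (hmem a c) (hmem' a c)
  have cbd : ConnIn T' b d := connIn_of_mem hbdT' (hmem b d) (hmem' b d)
  have cab : ConnIn T' a b := by
    rcases hcc with h | h | h | h
    · exact connIn_mono hHT' h
    · exact connIn_trans (connIn_mono hHT' h) (connIn_symm cbd)
    · exact connIn_trans cac (connIn_symm (connIn_mono hHT' h))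
    · exact connIn_trans cac (connIn_trans (connIn_mono hHT' h) (connIn_symm cbd))
  have conn4 : ∀ x : V, (x = a ∨ x = b ∨ x = c ∨ x = d) → ConnIn T' a x := by
    rintro x (rfl | rfl | rfl | rfl)
    · exact connIn_refl T' x
    · exact cab
    · exact cac
    · exact connIn_trans cab cbd
  have hreach : ∀ u ∈ edgeVerts T, ∃ x, (x = a ∨ x = b ∨ x = c ∨ x = d) ∧ ConnIn H u x := by
    intro u hu
    have hau : ConnIn T a u := hTconn a haT u hu
    have : u ∈ {z : V | ∃ x, (x = a ∨ x = b ∨ x = c ∨ x = d) ∧ ConnIn H z x} := by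
      refine connIn_closed ?_ ⟨a, Or.inl rfl, connIn_refl H a⟩ hau
      intro x y hxy hx
      by_cases h1 : s(x, y) = s(a, b)
      · rcases (Sym2.eq_iff.mp h1) with ⟨rfl, rfl⟩ | ⟨rfl, rfl⟩
        · exact ⟨y, Or.inr (Or.inl rfl), connIn_refl H y⟩
        · exact ⟨y, Or.inl rfl, connIn_refl H y⟩
      by_cases h2 : s(x, y) = s(c, d)
      · rcases (Sym2.eq_iff.mp h2) with ⟨rfl, rfl⟩ | ⟨rfl, rfl⟩
        · exact ⟨y, Or.inr (Or.inr (Or.inr rfl)), connIn_refl H y⟩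
        · exact ⟨y, Or.inr (Or.inr (Or.inl rfl)), connIn_refl H y⟩
      · obtain ⟨p, hp, hxp⟩ := hx
        have hHe : s(x, y) ∈ H := Finset.mem_sdiff.mpr ⟨hxy, by simp [h1, h2]⟩
        exact ⟨p, hp, connIn_trans (connIn_symm (connIn_of_mem hHe (hmem x y) (hmem' x y))) hxp⟩
    exact this
  have hconn' : ∀ u ∈ edgeVerts T', ∀ w ∈ edgeVerts T', ConnIn T' u w := by
    intro u hu w hw
    rw [hev] at hu hw
    obtain ⟨x, hx, hux⟩ := hreach u hu
    obtain ⟨y, hy, hwy⟩ := hreach w hw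
    exact connIn_trans (connIn_mono hHT' hux)
      (connIn_trans (connIn_symm (conn4 x hx))
        (connIn_trans (conn4 y hy) (connIn_symm (connIn_mono hHT' hwy))))
  -- budget
  have hdisj : Disjoint H ({s(a, c), s(b, d)} : Finset (Sym2 V)) := by
    rw [Finset.disjoint_right]
    intro e he
    rcases Finset.mem_insert.mp he with rfl | h1
    · exact fun h => hacT (hHsub h)
    · rw [Finset.mem_singleton] at h1; subst h1
      exact fun h => hbdT (hHsub h)
  have hpairsub : ({s(a, b), s(c, d)} : Finset (Sym2 V)) ⊆ T := by
    intro e he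
    rcases Finset.mem_insert.mp he with rfl | h1
    · exact habT
    · rw [Finset.mem_singleton] at h1; subst h1; exact hcdT
  have hsum : ∑ e ∈ T', I.len e
      = ∑ e ∈ T, I.len e - (I.len s(a, b) + I.len s(c, d))
        + (I.len s(a, c) + I.len s(b, d)) := by
    have hsd : ∑ e ∈ H, I.len e
        = ∑ e ∈ T, I.len e - ∑ e ∈ ({s(a, b), s(c, d)} : Finset (Sym2 V)), I.len e := by
      rw [hH, eq_sub_iff_add_eq]
      exact Finset.sum_sdiff hpairsub
    rw [hT', Finset.sum_union hdisj, hsd, Finset.sum_pair eabcd, Finset.sum_pair eacbd]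
  have hbudget : ∑ e ∈ T', I.len e ≤ I.budget := by
    rw [hsum]; linarith
  have hfeas : IsFeasibleTour I T' := ⟨⟨hT'sub, hconn', hdeg'⟩, hev ▸ hTdepot, hbudget⟩
  refine ⟨⟨hfeas, ?_⟩, ?_⟩
  · intro T'' hT''
    rw [show collectedPrize I (edgeVerts T') = collectedPrize I (edgeVerts T) by rw [hev]]
    exact hTopt T'' hT''
  · intro h
    rcases Finset.mem_union.mp h with hh | hn
    · exact (Finset.mem_sdiff.mp hh).2 (by simp)
    · rcases Finset.mem_insert.mp hn with h1 | h1
      · exact eabac h1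
      · rw [Finset.mem_singleton] at h1; exact eabbd h1

lemma sdiff_six_eq {T T' : Finset (Sym2 V)} {E1 E2 E3 E4 E5 E6 : Sym2 V}
    (h : ∀ e : Sym2 V, e ≠ E1 → e ≠ E2 → e ≠ E3 → e ≠ E4 → e ≠ E5 → e ≠ E6 →
      (e ∈ T ↔ e ∈ T')) :
    T \ {E1, E2, E3, E4, E5, E6} = T' \ {E1, E2, E3, E4, E5, E6} := by
  ext e
  simp only [Finset.mem_sdiff, Finset.mem_insert, Finset.mem_singleton]
  constructor
  · rintro ⟨he, hne⟩
    push_neg at hne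
    obtain ⟨n1, n2, n3, n4, n5, n6⟩ := hne
    refine ⟨(h e n1 n2 n3 n4 n5 n6).mp he, ?_⟩
    push_neg
    exact ⟨n1, n2, n3, n4, n5, n6⟩
  · rintro ⟨he, hne⟩
    push_neg at hne
    obtain ⟨n1, n2, n3, n4, n5, n6⟩ := hne
    refine ⟨(h e n1 n2 n3 n4 n5 n6).mpr he, ?_⟩
    push_neg
    exact ⟨n1, n2, n3, n4, n5, n6⟩

lemma degree_fromEdgeSet_eq (C : Finset (Sym2 V)) (hnd : ∀ e ∈ C, ¬ e.IsDiag) (v : V)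
    [DecidableRel (SimpleGraph.fromEdgeSet (↑C : Set (Sym2 V))).Adj] :
    (SimpleGraph.fromEdgeSet (↑C : Set (Sym2 V))).degree v
      = (C.filter (fun e => v ∈ e)).card := by
  classical
  rw [← SimpleGraph.card_incidenceFinset_eq_degree,
    SimpleGraph.incidenceFinset_eq_filter]
  congr 1
  have : (SimpleGraph.fromEdgeSet (↑C : Set (Sym2 V))).edgeFinset = C := by
    ext e
    simp only [SimpleGraph.mem_edgeFinset, SimpleGraph.edgeSet_fromEdgeSet,
      Set.mem_diff, Finset.mem_coe, Set.mem_setOf_eq]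
    exact ⟨fun h => h.1, fun h => ⟨h, hnd e h⟩⟩
  rw [this]

open scoped Classical in
lemma parity_component (C : Finset (Sym2 V)) (hnd : ∀ e ∈ C, ¬ e.IsDiag) (u : V) :
    Even ((Finset.univ.filter
      (fun w => ConnIn C u w ∧ Odd ((C.filter (fun e => w ∈ e)).card))).card) := by
  classical
  set C' := C.filter (fun e => ∃ x ∈ e, ConnIn C u x) with hC'
  have hC'sub : C' ⊆ C := Finset.filter_subset _ _
  have key : ∀ w : V, ConnIn C u w →
      C'.filter (fun e => w ∈ e) = C.filter (fun e => w ∈ e) := by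
    intro w hw
    ext e
    simp only [hC', Finset.filter_filter, Finset.mem_filter]
    constructor
    · rintro ⟨h1, h2, h3⟩; exact ⟨h1, h3⟩
    · rintro ⟨h1, h2⟩; exact ⟨h1, ⟨w, h2, hw⟩, h2⟩
  have key2 : ∀ w : V, ¬ ConnIn C u w → C'.filter (fun e => w ∈ e) = ∅ := by
    intro w hw
    rw [Finset.filter_eq_empty_iff]
    rintro e he hwe
    simp only [hC', Finset.mem_filter] at he
    obtain ⟨heC, x, hxe, hux⟩ := he
    exact hw (connIn_trans hux (connIn_of_mem heC hxe hwe))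
  have hnd' : ∀ e ∈ C', ¬ e.IsDiag := fun e he => hnd e (hC'sub he)
  have hset : (Finset.univ.filter
        (fun w => ConnIn C u w ∧ Odd ((C.filter (fun e => w ∈ e)).card)))
      = (Finset.univ.filter
        (fun w => Odd ((SimpleGraph.fromEdgeSet (↑C' : Set (Sym2 V))).degree w))) := by
    ext w
    simp only [Finset.mem_filter, Finset.mem_univ, true_and]
    rw [degree_fromEdgeSet_eq C' hnd' w]
    constructor
    · rintro ⟨hcw, hodd⟩
      rw [key w hcw]; exact hodd
    · intro hodd
      by_cases hcw : ConnIn C u w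
      · exact ⟨hcw, by rwa [key w hcw] at hodd⟩
      · rw [key2 w hcw] at hodd; simp at hodd
  rw [hset]
  exact SimpleGraph.even_card_odd_degree_vertices _

/-- Proposition 2 (tour BPCCSP): if v₁, v₂, v₃, v₄ are four distinct vertices whose six
connecting edges are in E, and the pair {e₁₂, e₃₄} is strictly more expensive than both
other opposite pairs, then for any optimal tour T there is an optimal tour T'\'' not
containing both e₁₂ and e₃₄ and agreeing with T outside the six edges. -/
theorem tour_bpccsp_symmetry_breaking
    (I : BPCCSPInstance V)
    (v₁ v₂ v₃ v₄ : V)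
    (h12 : v₁ ≠ v₂) (h13 : v₁ ≠ v₃) (h14 : v₁ ≠ v₄)
    (h23 : v₂ ≠ v₃) (h24 : v₂ ≠ v₄) (h34 : v₃ ≠ v₄)
    (hE12 : s(v₁, v₂) ∈ I.G.edgeSet) (hE13 : s(v₁, v₃) ∈ I.G.edgeSet)
    (hE14 : s(v₁, v₄) ∈ I.G.edgeSet) (hE23 : s(v₂, v₃) ∈ I.G.edgeSet)
    (hE24 : s(v₂, v₄) ∈ I.G.edgeSet) (hE34 : s(v₃, v₄) ∈ I.G.edgeSet)
    (hc1 : I.len s(v₁, v₃) + I.len s(v₂, v₄) < I.len s(v₁, v₂) + I.len s(v₃, v₄))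
    (hc2 : I.len s(v₂, v₃) + I.len s(v₁, v₄) < I.len s(v₁, v₂) + I.len s(v₃, v₄))
    (T : Finset (Sym2 V)) (hT : IsOptimalTour I T) :
    ∃ T' : Finset (Sym2 V), IsOptimalTour I T' ∧
      ¬ (s(v₁, v₂) ∈ T' ∧ s(v₃, v₄) ∈ T') ∧
      T \ {s(v₁, v₂), s(v₁, v₃), s(v₁, v₄), s(v₂, v₃), s(v₂, v₄), s(v₃, v₄)}
        = T' \ {s(v₁, v₂), s(v₁, v₃), s(v₁, v₄), s(v₂, v₃), s(v₂, v₄), s(v₃, v₄)} := by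
  classical
  by_cases hboth : s(v₁, v₂) ∈ T ∧ s(v₃, v₄) ∈ T
  swap
  · exact ⟨T, hT, hboth, rfl⟩
  obtain ⟨h12T, h34T⟩ := hboth
  have hTsub : (↑T : Set (Sym2 V)) ⊆ I.G.edgeSet := hT.1.1.1
  have hTconn := hT.1.1.2.1
  have hTdeg := hT.1.1.2.2
  set H := T \ ({s(v₁, v₂), s(v₃, v₄)} : Finset (Sym2 V)) with hH
  have hmem : ∀ x y : V, x ∈ s(x, y) := fun x y => Sym2.mem_mk_left x y
  have hmem' : ∀ x y : V, y ∈ s(x, y) := fun x y => Sym2.mem_mk_right x y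
  have hnmem : ∀ v x y : V, v ≠ x → v ≠ y → v ∉ s(x, y) := by
    intro v x y hx hy h
    rcases Sym2.mem_iff.mp h with rfl | rfl
    · exact hx rfl
    · exact hy rfl
  have hv1T : v₁ ∈ edgeVerts T := mem_edgeVerts.mpr ⟨_, h12T, hmem v₁ v₂⟩
  have hv2T : v₂ ∈ edgeVerts T := mem_edgeVerts.mpr ⟨_, h12T, hmem' v₁ v₂⟩
  have hv3T : v₃ ∈ edgeVerts T := mem_edgeVerts.mpr ⟨_, h34T, hmem v₃ v₄⟩
  have hv4T : v₄ ∈ edgeVerts T := mem_edgeVerts.mpr ⟨_, h34T, hmem' v₃ v₄⟩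
  have hsw : s(v₂, v₁) = s(v₁, v₂) := Sym2.eq_swap
  -- helper: the two incident edges of a vertex determine its filter
  have htwo : ∀ (v : V) (e1 e2 : Sym2 V), v ∈ e1 → v ∈ e2 → e1 ≠ e2 → e1 ∈ T → e2 ∈ T →
      v ∈ edgeVerts T → ({e1, e2} : Finset (Sym2 V)) = T.filter (fun e => v ∈ e) := by
    intro v e1 e2 hv1 hv2 hne he1 he2 hv
    apply Finset.eq_of_subset_of_card_le
    · intro e he
      rcases Finset.mem_insert.mp he with rfl | h
      · exact Finset.mem_filter.mpr ⟨he1, hv1⟩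
      · rw [Finset.mem_singleton] at h; subst h
        exact Finset.mem_filter.mpr ⟨he2, hv2⟩
    · rw [hTdeg v hv, Finset.card_insert_of_notMem (by simpa using hne),
        Finset.card_singleton]
  by_cases hA : ConnIn H v₁ v₃ ∨ ConnIn H v₂ v₄
  · -- use the swap to {s(v₂,v₃), s(v₁,v₄)}
    have h14T : s(v₁, v₄) ∉ T := by
      intro h14T
      have hfa := htwo v₁ s(v₁, v₂) s(v₁, v₄) (hmem _ _) (hmem _ _)
        (by rw [ne_eq, Sym2.eq_iff]; tauto) h12T h14T hv1T
      have hfd := htwo v₄ s(v₃, v₄) s(v₁, v₄) (hmem' _ _) (hmem' _ _)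
        (by rw [ne_eq, Sym2.eq_iff]; tauto) h34T h14T hv4T
      have hcl : ∀ x y : V, s(x, y) ∈ H → x ∈ ({v₁, v₄} : Set V) → y ∈ ({v₁, v₄} : Set V) := by
        intro x y hxyH hx
        obtain ⟨hxyT, hne⟩ := Finset.mem_sdiff.mp hxyH
        simp only [Finset.mem_insert, Finset.mem_singleton] at hne
        push_neg at hne
        simp only [Set.mem_insert_iff, Set.mem_singleton_iff] at hx ⊢
        rcases hx with rfl | rfl
        · have : s(x, y) ∈ ({s(x, v₂), s(x, v₄)} : Finset (Sym2 V)) := by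
            rw [hfa]; exact Finset.mem_filter.mpr ⟨hxyT, hmem x y⟩
          rcases Finset.mem_insert.mp this with h | h
          · exact absurd h hne.1
          · rw [Finset.mem_singleton] at h
            rcases Sym2.eq_iff.mp h with ⟨-, rfl⟩ | ⟨rfl, rfl⟩
            · exact Or.inr rfl
            · exact Or.inl rfl
        · have : s(x, y) ∈ ({s(v₃, x), s(v₁, x)} : Finset (Sym2 V)) := by
            rw [hfd]; exact Finset.mem_filter.mpr ⟨hxyT, hmem x y⟩
          rcases Finset.mem_insert.mp this with h | h
          · exact absurd h hne.2
          · rw [Finset.mem_singleton] at h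
            rcases Sym2.eq_iff.mp h with ⟨rfl, rfl⟩ | ⟨-, rfl⟩
            · exact Or.inr rfl
            · exact Or.inl rfl
      rcases hA with h | h
      · have := connIn_closed hcl (by simp) h
        simp only [Set.mem_insert_iff, Set.mem_singleton_iff] at this
        rcases this with h' | h'
        · exact h13 h'.symm
        · exact h34 h'
      · have := connIn_closed hcl (by simp) (connIn_symm h)
        simp only [Set.mem_insert_iff, Set.mem_singleton_iff] at this
        rcases this with h' | h'
        · exact h12 h'.symm
        · exact h24 h'
    have h23T : s(v₂, v₃) ∉ T := by
      intro h23T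
      have hfb := htwo v₂ s(v₁, v₂) s(v₂, v₃) (hmem' _ _) (hmem _ _)
        (by rw [ne_eq, Sym2.eq_iff]; tauto) h12T h23T hv2T
      have hfc := htwo v₃ s(v₃, v₄) s(v₂, v₃) (hmem _ _) (hmem' _ _)
        (by rw [ne_eq, Sym2.eq_iff]; tauto) h34T h23T hv3T
      have hcl : ∀ x y : V, s(x, y) ∈ H → x ∈ ({v₂, v₃} : Set V) → y ∈ ({v₂, v₃} : Set V) := by
        intro x y hxyH hx
        obtain ⟨hxyT, hne⟩ := Finset.mem_sdiff.mp hxyH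
        simp only [Finset.mem_insert, Finset.mem_singleton] at hne
        push_neg at hne
        simp only [Set.mem_insert_iff, Set.mem_singleton_iff] at hx ⊢
        rcases hx with rfl | rfl
        · have : s(x, y) ∈ ({s(v₁, x), s(x, v₃)} : Finset (Sym2 V)) := by
            rw [hfb]; exact Finset.mem_filter.mpr ⟨hxyT, hmem x y⟩
          rcases Finset.mem_insert.mp this with h | h
          · exact absurd h hne.1
          · rw [Finset.mem_singleton] at h
            rcases Sym2.eq_iff.mp h with ⟨-, rfl⟩ | ⟨rfl, rfl⟩
            · exact Or.inr rfl
            · exact Or.inl rfl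
        · have : s(x, y) ∈ ({s(x, v₄), s(v₂, x)} : Finset (Sym2 V)) := by
            rw [hfc]; exact Finset.mem_filter.mpr ⟨hxyT, hmem x y⟩
          rcases Finset.mem_insert.mp this with h | h
          · exact absurd h hne.2
          · rw [Finset.mem_singleton] at h
            rcases Sym2.eq_iff.mp h with ⟨rfl, rfl⟩ | ⟨-, rfl⟩
            · exact Or.inr rfl
            · exact Or.inl rfl
      rcases hA with h | h
      · have := connIn_closed hcl (by simp) (connIn_symm h)
        simp only [Set.mem_insert_iff, Set.mem_singleton_iff] at this
        rcases this with h' | h'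
        · exact h12 h'
        · exact h13 h'
      · have := connIn_closed hcl (by simp) h
        simp only [Set.mem_insert_iff, Set.mem_singleton_iff] at this
        rcases this with h' | h'
        · exact h24 h'.symm
        · exact h34 h'.symm
    obtain ⟨hopt, hnab⟩ := swap_tour I v₂ v₁ v₃ v₄ h12.symm h23 h24 h13 h14 h34 hE23 hE14 T hT
      (by rw [hsw]; exact h12T) h34T h23T h14T
      (by rw [hsw]; exact hc2)
      (by
        rw [hsw]
        rcases hA with h | h
        · exact Or.inr (Or.inr (Or.inl h))
        · exact Or.inr (Or.inl h))
    rw [hsw] at hopt hnab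
    refine ⟨(T \ {s(v₁, v₂), s(v₃, v₄)}) ∪ {s(v₂, v₃), s(v₁, v₄)}, hopt, ?_, ?_⟩
    · rintro ⟨h1, -⟩; exact hnab h1
    · apply sdiff_six_eq
      intro e n1 n2 n3 n4 n5 n6
      rw [Finset.mem_union, Finset.mem_sdiff]
      simp only [Finset.mem_insert, Finset.mem_singleton]
      constructor
      · intro he
        refine Or.inl ⟨he, ?_⟩
        rintro (h | h)
        · exact n1 h
        · exact n6 h
      · rintro (⟨he, -⟩ | h | h)
        · exact he
        · exact absurd h n4
        · exact absurd h n3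
  · -- use the swap to {s(v₁,v₃), s(v₂,v₄)}
    push_neg at hA
    obtain ⟨hn13, hn24⟩ := hA
    have h13T : s(v₁, v₃) ∉ T := by
      intro h
      refine hn13 (connIn_of_mem (e := s(v₁, v₃)) ?_ (hmem _ _) (hmem' _ _))
      rw [hH, Finset.mem_sdiff]
      refine ⟨h, ?_⟩
      simp only [Finset.mem_insert, Finset.mem_singleton]
      rw [Sym2.eq_iff, Sym2.eq_iff]
      tauto
    have h24T : s(v₂, v₄) ∉ T := by
      intro h
      refine hn24 (connIn_of_mem (e := s(v₂, v₄)) ?_ (hmem _ _) (hmem' _ _))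
      rw [hH, Finset.mem_sdiff]
      refine ⟨h, ?_⟩
      simp only [Finset.mem_insert, Finset.mem_singleton]
      rw [Sym2.eq_iff, Sym2.eq_iff]
      tauto
    -- parity argument
    have hnd : ∀ e ∈ H, ¬ e.IsDiag := by
      intro e he
      exact SimpleGraph.not_isDiag_of_mem_edgeSet I.G (hTsub (Finset.sdiff_subset he))
    have hHfilt : ∀ w : V, H.filter (fun e => w ∈ e)
        = (T.filter (fun e => w ∈ e)) \ ({s(v₁, v₂), s(v₃, v₄)} : Finset (Sym2 V)) := by
      intro w
      ext e
      simp only [hH, Finset.mem_filter, Finset.mem_sdiff]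
      tauto
    have hodd1 : ∀ w : V, w ∈ ({v₁, v₂} : Finset V) →
        (H.filter (fun e => w ∈ e)).card = 1 := by
      intro w hw
      have hw12 : w ∈ s(v₁, v₂) := by
        rcases Finset.mem_insert.mp hw with rfl | h
        · exact hmem _ _
        · rw [Finset.mem_singleton] at h; subst h; exact hmem' _ _
      have hw34 : w ∉ s(v₃, v₄) := by
        rcases Finset.mem_insert.mp hw with rfl | h
        · exact hnmem _ _ _ h13 h14
        · rw [Finset.mem_singleton] at h; subst h; exact hnmem _ _ _ h23 h24
      have hwT : w ∈ edgeVerts T := mem_edgeVerts.mpr ⟨_, h12T, hw12⟩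
      have : H.filter (fun e => w ∈ e) = (T.filter (fun e => w ∈ e)).erase s(v₁, v₂) := by
        rw [hHfilt w]
        ext e
        simp only [Finset.mem_sdiff, Finset.mem_insert, Finset.mem_singleton,
          Finset.mem_erase, Finset.mem_filter]
        constructor
        · rintro ⟨⟨h1, h2⟩, h3⟩
          push_neg at h3
          exact ⟨h3.1, h1, h2⟩
        · rintro ⟨h1, h2, h3⟩
          refine ⟨⟨h2, h3⟩, ?_⟩
          rintro (rfl | rfl)
          · exact h1 rfl
          · exact hw34 h3
      rw [this, Finset.card_erase_of_mem (Finset.mem_filter.mpr ⟨h12T, hw12⟩),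
        hTdeg w hwT]
    have hodd2 : ∀ w : V, w ∈ ({v₃, v₄} : Finset V) →
        (H.filter (fun e => w ∈ e)).card = 1 := by
      intro w hw
      have hw34 : w ∈ s(v₃, v₄) := by
        rcases Finset.mem_insert.mp hw with rfl | h
        · exact hmem _ _
        · rw [Finset.mem_singleton] at h; subst h; exact hmem' _ _
      have hw12 : w ∉ s(v₁, v₂) := by
        rcases Finset.mem_insert.mp hw with rfl | h
        · exact hnmem _ _ _ h13.symm h23.symm
        · rw [Finset.mem_singleton] at h; subst h; exact hnmem _ _ _ h14.symm h24.symm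
      have hwT : w ∈ edgeVerts T := mem_edgeVerts.mpr ⟨_, h34T, hw34⟩
      have : H.filter (fun e => w ∈ e) = (T.filter (fun e => w ∈ e)).erase s(v₃, v₄) := by
        rw [hHfilt w]
        ext e
        simp only [Finset.mem_sdiff, Finset.mem_insert, Finset.mem_singleton,
          Finset.mem_erase, Finset.mem_filter]
        constructor
        · rintro ⟨⟨h1, h2⟩, h3⟩
          push_neg at h3
          exact ⟨h3.2, h1, h2⟩
        · rintro ⟨h1, h2, h3⟩
          refine ⟨⟨h2, h3⟩, ?_⟩
          rintro (rfl | rfl)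
          · exact hw12 h3
          · exact h1 rfl
      rw [this, Finset.card_erase_of_mem (Finset.mem_filter.mpr ⟨h34T, hw34⟩),
        hTdeg w hwT]
    have heven : ∀ w : V, w ≠ v₁ → w ≠ v₂ → w ≠ v₃ → w ≠ v₄ →
        Even ((H.filter (fun e => w ∈ e)).card) := by
      intro w hw1 hw2 hw3 hw4
      have : H.filter (fun e => w ∈ e) = T.filter (fun e => w ∈ e) := by
        rw [hHfilt w]
        apply Finset.sdiff_eq_self_of_disjoint
        rw [Finset.disjoint_right]
        intro e he
        rcases Finset.mem_insert.mp he with rfl | h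
        · intro hmem2
          exact hnmem w v₁ v₂ hw1 hw2 (Finset.mem_filter.mp hmem2).2
        · rw [Finset.mem_singleton] at h; subst h
          intro hmem2
          exact hnmem w v₃ v₄ hw3 hw4 (Finset.mem_filter.mp hmem2).2
      rw [this]
      by_cases hwT : w ∈ edgeVerts T
      · rw [hTdeg w hwT]; exact even_two
      · have : T.filter (fun e => w ∈ e) = ∅ := by
          rw [Finset.filter_eq_empty_iff]
          intro e he hwe
          exact hwT (mem_edgeVerts.mpr ⟨e, he, hwe⟩)
        rw [this]; simp
    have hpar := parity_component H hnd v₁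
    have hv1mem : v₁ ∈ (Finset.univ.filter
        (fun w => ConnIn H v₁ w ∧ Odd ((H.filter (fun e => w ∈ e)).card))) := by
      refine Finset.mem_filter.mpr ⟨Finset.mem_univ _, connIn_refl H v₁, ?_⟩
      rw [hodd1 v₁ (by simp)]
      exact odd_one
    have hlt : 1 < (Finset.univ.filter
        (fun w => ConnIn H v₁ w ∧ Odd ((H.filter (fun e => w ∈ e)).card))).card := by
      obtain ⟨r, hr⟩ := hpar
      have h1 : 1 ≤ _ := Finset.card_pos.mpr ⟨v₁, hv1mem⟩
      omega
    obtain ⟨w, hw, hwne⟩ := Finset.exists_mem_ne hlt v₁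
    obtain ⟨-, hw1, hwodd⟩ := Finset.mem_filter.mp hw
    have hcc' : ConnIn H v₁ v₂ ∨ ConnIn H v₁ v₄ := by
      by_cases hw2 : w = v₂
      · subst hw2; exact Or.inl hw1
      by_cases hw3 : w = v₃
      · subst hw3; exact absurd hw1 hn13
      by_cases hw4 : w = v₄
      · subst hw4; exact Or.inr hw1
      · exact absurd hwodd (by simpa using (heven w hwne hw2 hw3 hw4))
    obtain ⟨hopt, hnab⟩ := swap_tour I v₁ v₂ v₃ v₄ h12 h13 h14 h23 h24 h34 hE13 hE24 T hT
      h12T h34T h13T h24T hc1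
      (by
        rcases hcc' with h | h
        · exact Or.inl h
        · exact Or.inr (Or.inl h))
    refine ⟨(T \ {s(v₁, v₂), s(v₃, v₄)}) ∪ {s(v₁, v₃), s(v₂, v₄)}, hopt, ?_, ?_⟩
    · rintro ⟨h1, -⟩; exact hnab h1
    · apply sdiff_six_eq
      intro e n1 n2 n3 n4 n5 n6
      rw [Finset.mem_union, Finset.mem_sdiff]
      simp only [Finset.mem_insert, Finset.mem_singleton]
      constructor
      · intro he
        refine Or.inl ⟨he, ?_⟩
        rintro (h | h)
        · exact n1 h
        · exact n6 h
      · rintro (⟨he, -⟩ | h | h)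
        · exact he
        · exact absurd h n2
        · exact absurd h n5
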